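/- arXiv:1712.07444 — 2 statements merged into one kernel-verified Lean document; each statement's English description precedes it below -/
import Mathlib

section
/- Let Q be a finite quiver and a an arrow. Then End_{KQ}(C(a)) = K, where C(a) = KQe_{t(a)}/KQa. -/
/-! `C(a)` is cyclic, generated by the class `e` of the trivial path at the source `i` of `a`,
so an endomorphism `θ` is determined by `θ e`, and `a · θ e = θ (a · e) = 0`. Writing `θ e` as
the class of a combination `y` of paths `i ⟶ i`, this says that each path `q a` with `q` in the
support of `y` starts with `a`; for `q ≠ e_i` this forces `q` itself to start with `a`, i.e.
`q ∈ KQa`. Hence `θ e = y(e_i) • e`, and `θ` is multiplication by that scalar. -/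

open Quiver

universe w v u

/-- A representation of a quiver `V` over a field `K`: a vector space at each vertex
and a linear map for each arrow. -/
structure QRep (K : Type u) [Field K] (V : Type v) [Quiver.{v+1} V] where
  space : V → Type w
  [isAddCommGroup : ∀ i, AddCommGroup (space i)]
  [isModule : ∀ i, Module K (space i)]
  map : ∀ {i j : V}, (i ⟶ j) → (space i →ₗ[K] space j)

attribute [instance] QRep.isAddCommGroup QRep.isModule

/-- A morphism of quiver representations. -/
structure QRepHom {K : Type u} [Field K] {V : Type v} [Quiver.{v+1} V]
    (X Y : QRep.{w} K V) where
  app : ∀ i, X.space i →ₗ[K] Y.space i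
  comm : ∀ {i j : V} (a : i ⟶ j), (Y.map a).comp (app i) = (app j).comp (X.map a)

/-- The projective representation `KQe_i`: at vertex `j` it has basis the paths `i ⟶ j`,
and arrows act by postcomposition. -/
noncomputable def projRep (K : Type u) [Field K] (V : Type v) [Quiver.{v+1} V] (i : V) :
    QRep.{max u (v+1)} K V where
  space j := Path i j →₀ K
  map a := Finsupp.lmapDomain K K (fun p => p.cons a)

/-- Right multiplication by an arrow `a : i ⟶ j`, as a morphism `KQe_j → KQe_i`. -/
noncomputable def rmulArrow {K : Type u} [Field K] {V : Type v} [Quiver.{v+1} V]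
    {i j : V} (a : i ⟶ j) : QRepHom (projRep K V j) (projRep K V i) where
  app k := Finsupp.lmapDomain K K (fun p : Path j k => (a.toPath).comp p)
  comm := by
    intro k l b
    refine Finsupp.lhom_ext fun p c => ?_
    show Finsupp.mapDomain _ (Finsupp.mapDomain _ (Finsupp.single p c)) = Finsupp.mapDomain _ (Finsupp.mapDomain _ (Finsupp.single p c))
    simp [Finsupp.mapDomain_single, Quiver.Path.comp_cons]

/-- The cokernel representation of a morphism of representations. -/
noncomputable def cokerRep {K : Type u} [Field K] {V : Type v} [Quiver.{v+1} V]
    {F X : QRep.{w} K V} (f : QRepHom F X) : QRep.{w} K V where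
  space i := X.space i ⧸ LinearMap.range (f.app i)
  map {i j} a := Submodule.mapQ _ _ (X.map a) (by
    rintro x ⟨y, rfl⟩
    exact ⟨F.map a y, by
      rw [← LinearMap.comp_apply, ← f.comm, LinearMap.comp_apply]⟩)

/-- The projection onto the cokernel representation. -/
noncomputable def cokerProj {K : Type u} [Field K] {V : Type v} [Quiver.{v+1} V]
    {F X : QRep.{w} K V} (f : QRepHom F X) : QRepHom X (cokerRep f) where
  app i := (LinearMap.range (f.app i)).mkQ
  comm {i j} a := Submodule.mapQ_mkQ _ _ (h := by
    rintro x ⟨y, rfl⟩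
    exact ⟨F.map a y, by
      rw [← LinearMap.comp_apply, ← f.comm, LinearMap.comp_apply]⟩)

/-- The representation `C(a) = KQe_{t(a)}/KQa` for an arrow `a : i ⟶ j`. -/
noncomputable def Ca {K : Type u} [Field K] {V : Type v} [Quiver.{v+1} V]
    {i j : V} (a : i ⟶ j) : QRep.{max u (v+1)} K V :=
  cokerRep (rmulArrow (K := K) a)


variable {K : Type u} [Field K] {V : Type v} [Quiver.{v+1} V]

open Finsupp

namespace QRep

noncomputable def mapPath (X : QRep.{w} K V) {i : V} :
    ∀ {k : V}, Path i k → (X.space i →ₗ[K] X.space k)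
  | _, .nil => LinearMap.id
  | _, .cons p b => X.map b ∘ₗ X.mapPath p

def IsGeneratedBy (X : QRep.{w} K V) {i : V} (e : X.space i) : Prop :=
  ∀ k, Submodule.span K (Set.range fun q : Path i k => X.mapPath q e) = ⊤

end QRep

theorem QRepHom.app_mapPath {X Y : QRep.{w} K V} (θ : QRepHom X Y) {i k : V}
    (q : Path i k) (x : X.space i) :
    θ.app k (X.mapPath q x) = Y.mapPath q (θ.app i x) := by
  induction q with
  | nil => rfl
  | cons p b ih =>
    simp only [QRep.mapPath, LinearMap.comp_apply, ← ih]
    exact (LinearMap.congr_fun (θ.comm b) _).symm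

namespace QRep.IsGeneratedBy

variable {X Y : QRep.{w} K V} {i : V} {e : X.space i}

theorem of_surjective (he : X.IsGeneratedBy e) (g : QRepHom X Y)
    (hg : ∀ k, Function.Surjective (g.app k)) : Y.IsGeneratedBy (g.app i e) := by
  intro k
  have : (Set.range fun q : Path i k => Y.mapPath q (g.app i e)) =
      g.app k '' Set.range fun q : Path i k => X.mapPath q e := by
    simp only [← Set.range_comp, Function.comp_def, g.app_mapPath]
  rw [this, Submodule.span_image, he k, Submodule.map_top, LinearMap.range_eq_top.mpr (hg k)]

theorem eq_smul (he : X.IsGeneratedBy e) (θ : QRepHom X X) {c : K} (hθ : θ.app i e = c • e)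
    (k : V) (x : X.space k) : θ.app k x = c • x := by
  have : θ.app k = c • LinearMap.id :=
    LinearMap.ext_on_range (he k) fun q => by simp [θ.app_mapPath, hθ]
  simp [this]

end QRep.IsGeneratedBy

theorem projRep_mapPath_single_nil (i : V) {k : V} (q : Path i k) :
    (projRep K V i).mapPath q (single .nil 1) = single q 1 := by
  induction q with
  | nil => rfl
  | cons p b ih =>
    show mapDomain _ ((projRep K V i).mapPath p (single .nil 1)) = _
    rw [ih, mapDomain_single]

theorem projRep_isGeneratedBy (i : V) : (projRep K V i).IsGeneratedBy (single .nil (1 : K)) := by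
  intro k
  simp only [projRep_mapPath_single_nil]
  exact (Finsupp.basisSingleOne (R := K) (ι := Path i k)).span_eq

theorem mem_range_rmulArrow_app_iff {i j k : V} (a : i ⟶ j) (y : Path i k →₀ K) :
    y ∈ LinearMap.range ((rmulArrow a).app k) ↔
      ∀ q ∉ Set.range fun p : Path j k => a.toPath.comp p, y q = 0 := by
  show y ∈ LinearMap.range (lmapDomain K K _) ↔ _
  rw [← Submodule.map_top, ← supported_univ, lmapDomain_supported, Set.image_univ,
    mem_supported']

theorem Quiver.Path.eq_nil_or_mem_range_toPath_comp_of_cons {i j : V} (a : i ⟶ j)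
    {q : Path i i} (h : q.cons a ∈ Set.range fun p : Path j j => a.toPath.comp p) :
    q = .nil ∨ q ∈ Set.range fun p : Path j i => a.toPath.comp p := by
  obtain ⟨p, hp⟩ := h
  cases p with
  | nil => exact .inl (eq_of_heq (Path.heq_of_cons_eq_cons hp)).symm
  | cons p' b =>
    obtain rfl := Path.obj_eq_of_cons_eq_cons hp
    exact .inr ⟨p', eq_of_heq (Path.heq_of_cons_eq_cons hp)⟩

namespace Ca

variable {i j : V} (a : i ⟶ j)

noncomputable def generator : (Ca (K := K) a).space i :=
  (cokerProj (rmulArrow (K := K) a)).app i (single .nil 1)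

theorem isGeneratedBy_generator : (Ca (K := K) a).IsGeneratedBy (generator a) :=
  (projRep_isGeneratedBy i).of_surjective _ fun _ => Submodule.mkQ_surjective _

theorem map_generator : (Ca (K := K) a).map a (generator a) = 0 := by
  refine (Submodule.Quotient.mk_eq_zero _).mpr ⟨single .nil 1, ?_⟩
  show mapDomain _ (single _ _) = mapDomain _ (single _ _)
  rw [mapDomain_single, mapDomain_single]
  rfl

theorem eq_smul_generator_of_map_eq_zero (z : (Ca (K := K) a).space i)
    (hz : (Ca (K := K) a).map a z = 0) : ∃ c : K, z = c • generator a := by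
  obtain ⟨y : Path i i →₀ K, rfl⟩ := Submodule.mkQ_surjective _ z
  have hya : mapDomain (fun p : Path i i => p.cons a) y ∈ LinearMap.range ((rmulArrow a).app j) :=
    (Submodule.Quotient.mk_eq_zero _).mp hz
  refine ⟨y .nil, ?_⟩
  suffices hsub : (y - y .nil • single .nil 1 : Path i i →₀ K) ∈
      LinearMap.range ((rmulArrow a).app i) from
    ((Submodule.Quotient.eq (LinearMap.range ((rmulArrow a).app i))).mpr hsub).trans
      (map_smul (Submodule.mkQ _) _ _)
  refine (mem_range_rmulArrow_app_iff a _).mpr fun q hq => ?_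
  rcases eq_or_ne q .nil with rfl | hnil
  · simp
  · have hqa := (mem_range_rmulArrow_app_iff a _).mp hya (q.cons a) fun h =>
      (Path.eq_nil_or_mem_range_toPath_comp_of_cons a h).elim hnil hq
    have hinj : (fun p : Path i i => p.cons a).Injective := Path.comp_injective_left a.toPath
    rw [mapDomain_apply hinj] at hqa
    simp [hnil, hqa]

end Ca

/-- For an arrow `a` of a finite quiver, `End(C(a)) = K`: every endomorphism of
`C(a)` is multiplication by a scalar. -/
theorem end_Ca_eq_K {K : Type u} [Field K] {V : Type v} [Quiver.{v+1} V]
    [Fintype V] [∀ i j : V, Fintype (i ⟶ j)] {i j : V} (a : i ⟶ j) :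
    ∀ θ : QRepHom (Ca (K := K) a) (Ca (K := K) a),
      ∃ c : K, ∀ (k : V) (x : (Ca (K := K) a).space k), θ.app k x = c • x := by
  intro θ
  have hθ : (Ca a).map a (θ.app i (Ca.generator a)) = 0 := by
    rw [← LinearMap.comp_apply, θ.comm, LinearMap.comp_apply, Ca.map_generator, map_zero]
  obtain ⟨c, hc⟩ := Ca.eq_smul_generator_of_map_eq_zero a _ hθ
  exact ⟨c, (Ca.isGeneratedBy_generator a).eq_smul θ hc⟩
end

section
/- Let Q be a finite quiver, I and S disjoint subsets of Q_1, and suppose Q has no oriented I-cycles and no oriented S-cycles. Then the subcategory Rep^{I,S}(Q) of representations where arrows in I are injective and arrows in S are surjective is covariantly finite in Rep Q: for every finite-dimensional representation X there is a morphism f : X → Y with Y ∈ Rep^{I,S}(Q) such that every morphism from X to an object of Rep^{I,S}(Q) factors through f. -/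
open Quiver

universe w v u

/-- `Hom(A,B) = 0` in the category of representations. -/
def HomVanishes {K : Type u} [Field K] {V : Type v} [Quiver.{v+1} V]
    (A B : QRep.{w} K V) : Prop :=
  ∀ θ : QRepHom A B, ∀ (k : V) (x : A.space k), θ.app k x = 0

/-- `u, v` form a short exact sequence `0 → X → E → Z → 0` of representations. -/
def IsSES {K : Type u} [Field K] {V : Type v} [Quiver.{v+1} V]
    {X E Z : QRep.{w} K V} (u : QRepHom X E) (v : QRepHom E Z) : Prop :=
  ∀ k : V, Function.Injective (u.app k) ∧ Function.Surjective (v.app k) ∧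
    LinearMap.range (u.app k) = LinearMap.ker (v.app k)

/-- `Ext¹(Z,X) = 0`: every short exact sequence `0 → X → E → Z → 0` of
representations splits. -/
def ExtVanishes {K : Type u} [Field K] {V : Type v} [Quiver.{v+1} V]
    (Z X : QRep.{w} K V) : Prop :=
  ∀ (E : QRep.{w} K V) (u : QRepHom X E) (v : QRepHom E Z), IsSES u v →
    ∃ s : QRepHom Z E, ∀ k : V, (v.app k).comp (s.app k) = LinearMap.id

/-- `X` belongs to `Rep^{I,S} Q`: arrows in `I` act injectively and arrows in `S`
act surjectively. -/
def MemRepIS {K : Type u} [Field K] {V : Type v} [Quiver.{v+1} V]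
    (I S : ∀ i j : V, Set (i ⟶ j)) (X : QRep.{w} K V) : Prop :=
  (∀ {i j : V} (a : i ⟶ j), a ∈ I i j → Function.Injective (X.map a)) ∧
  (∀ {i j : V} (a : i ⟶ j), a ∈ S i j → Function.Surjective (X.map a))

/-- An oriented `A`-cycle in a quiver: a cyclic word `w_0 w_1 ⋯ w_{n-1}`, `n ≥ 1`
(indices mod `n`), each letter either an arrow of the quiver or a formal inverse of an
arrow in `A`, consecutive letters not inverse to each other, and `t(w_k) = h(w_{k+1})`.
Here `vert k = h(w_k)`, so the letter `w_k` goes from `vert (k+1)` to `vert k`. -/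
structure OrientedCycle {V : Type v} [Quiver.{v+1} V]
    (A : ∀ i j : V, Set (i ⟶ j)) where
  n : ℕ
  npos : 0 < n
  vert : ZMod n → V
  letter : ∀ k : ZMod n,
    (vert (k + 1) ⟶ vert k) ⊕ {a : vert k ⟶ vert (k + 1) // a ∈ A _ _}
  reduced₁ : ∀ (k : ZMod n) (x : vert (k + 1) ⟶ vert k)
    (y : vert (k + 1) ⟶ vert (k + 1 + 1)) (hy : y ∈ A _ _),
    letter k = Sum.inl x → letter (k + 1) = Sum.inr ⟨y, hy⟩ →
    (⟨vert (k + 1), vert k, x⟩ : Σ i j : V, i ⟶ j) ≠ ⟨vert (k + 1), vert (k + 1 + 1), y⟩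
  reduced₂ : ∀ (k : ZMod n) (x : vert k ⟶ vert (k + 1)) (hx : x ∈ A _ _)
    (y : vert (k + 1 + 1) ⟶ vert (k + 1)),
    letter k = Sum.inr ⟨x, hx⟩ → letter (k + 1) = Sum.inl y →
    (⟨vert k, vert (k + 1), x⟩ : Σ i j : V, i ⟶ j) ≠ ⟨vert (k + 1 + 1), vert (k + 1), y⟩

/-!
First replace `X` by its largest quotient on which the arrows of `I` act injectively: the
quotient by the smallest subrepresentation `U` with `a⁻¹(U) ⊆ U` for `a ∈ I`. The kernel of a
morphism into an `I`-injective representation is such a `U`, so the morphism factors through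
this quotient.

Then make the arrows of `S` surjective freely. Let `Y_v` be the product of copies of
`X_{o(w)}` over the reduced words `w` in arrows and inverses of arrows of `S` which end at `v`
and do not start with an arrow, `o(w)` being the vertex where `w` starts. An arrow `b` maps the
copy indexed by `w` identically to the copy indexed by the reduced form of `b w`, except on the
empty word, where it acts by `X b`. Then the arrows of `S` act surjectively, arrows outside `S`
still act injectively, and a morphism `X → Z` with `Z ∈ Rep^{I,S}` extends to `Y` by
transporting along the words, choosing sections of `Z s` for the letters `s⁻¹`. Finally `Y` is
finite-dimensional: a reduced word repeating a letter contains an oriented `S`-cycle, so the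
words are shorter than the number of letters.
-/

noncomputable section

namespace LinearMap

variable {R : Type*} [Semiring R] {ι κ : Type*} [Fintype ι] [DecidableEq ι] [DecidableEq κ]
  {M : ι → Type*} {N : κ → Type*} [∀ i, AddCommMonoid (M i)] [∀ i, Module R (M i)]
  [∀ k, AddCommMonoid (N k)] [∀ k, Module R (N k)]

/-- The map `(∀ i, M i) → (∀ k, N k)` sending the `i`-th summand to the `σ i`-th one by `φ i`. -/
def piMonomial (σ : ι → κ) (φ : ∀ i, M i →ₗ[R] N (σ i)) : (∀ i, M i) →ₗ[R] ∀ k, N k :=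
  lsum R M ℕ fun i => (single R N (σ i)).comp (φ i)

variable (σ : ι → κ) (φ : ∀ i, M i →ₗ[R] N (σ i))

@[simp]
theorem piMonomial_single (i : ι) (x : M i) :
    piMonomial σ φ (Pi.single i x) = Pi.single (σ i) (φ i x) :=
  lsum_piSingle R M ℕ _ i x

theorem piMonomial_apply_of_injective (hσ : σ.Injective) (f : ∀ i, M i) (i : ι) :
    piMonomial σ φ f (σ i) = φ i (f i) := by
  rw [piMonomial, lsum_apply, sum_apply, Finset.sum_apply, Finset.sum_eq_single i]
  · simp
  · intro i' _ hi'
    simp [hσ.ne hi']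
  · simp

theorem injective_piMonomial (hσ : σ.Injective) (hφ : ∀ i, Function.Injective (φ i)) :
    Function.Injective (piMonomial σ φ) := by
  intro f g hfg
  funext i
  apply hφ i
  rw [← piMonomial_apply_of_injective σ φ hσ, ← piMonomial_apply_of_injective σ φ hσ, hfg]

theorem surjective_piMonomial [Finite κ] (h : ∀ k, ∃ i, σ i = k ∧ Function.Surjective (φ i)) :
    Function.Surjective (piMonomial σ φ) := by
  rw [← range_eq_top, eq_top_iff, ← iSup_range_single R N, iSup_le_iff]
  rintro k - ⟨y, rfl⟩
  obtain ⟨i, rfl, hi⟩ := h k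
  obtain ⟨x, rfl⟩ := hi y
  exact ⟨Pi.single i x, piMonomial_single σ φ i x⟩

end LinearMap

theorem List.IsChain.exists_cyclic {α : Type*} [Finite α] {R : α → α → Prop} {l : List α}
    (hl : l.IsChain R) (hlen : Nat.card α < l.length) :
    ∃ (n : ℕ) (_ : NeZero n) (u : ZMod n → α), ∀ k, R (u k) (u (k + 1)) := by
  obtain ⟨a, b, hab, hlt⟩ : ∃ a b : Fin l.length, l[a] = l[b] ∧ a < b := by
    have : ¬ Function.Injective fun k : Fin l.length => l[k] := fun hinj => by
      have := Nat.card_le_card_of_injective _ hinj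
      simp only [Nat.card_eq_fintype_card, Fintype.card_fin] at this
      omega
    obtain ⟨a, b, h, hne⟩ := Function.not_injective_iff.mp this
    rcases lt_or_gt_of_ne hne with hlt | hlt
    exacts [⟨a, b, h, hlt⟩, ⟨b, a, h.symm, hlt⟩]
  have hlt : a.val < b.val := hlt
  have hab : l[a.val] = l[b.val] := hab
  have hb := b.isLt
  have : NeZero (b.val - a.val) := ⟨by omega⟩
  refine ⟨b.val - a.val, inferInstance, fun k => l[a.val + k.val]'(by have := k.val_lt; omega),
    fun k => ?_⟩
  have hk := k.val_lt
  have hsucc : (k + 1).val = (k.val + 1) % (b.val - a.val) := by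
    rw [ZMod.val_add, ZMod.val_one_eq_one_mod, Nat.add_mod_mod]
  have : l[a.val + (k + 1).val]'(by have := (k + 1).val_lt; omega) =
      l[a.val + k.val + 1]'(by omega) := by
    rcases Nat.lt_or_ge (k.val + 1) (b.val - a.val) with h | h
    · simp only [hsucc, Nat.mod_eq_of_lt h, Nat.add_assoc]
    · have h' : k.val + 1 = b.val - a.val := by omega
      simp only [hsucc, h', Nat.mod_self, Nat.add_zero, hab]
      congr 1
      omega
  simp only [this]
  exact List.isChain_iff_getElem.mp hl _ _

namespace QRepHom

variable {K : Type u} [Field K] {V : Type v} [Quiver.{v+1} V] {X Y Z : QRep.{w} K V}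

def comp (g : QRepHom Y Z) (f : QRepHom X Y) : QRepHom X Z where
  app i := (g.app i).comp (f.app i)
  comm a := by
    rw [← LinearMap.comp_assoc, g.comm, LinearMap.comp_assoc, f.comm, LinearMap.comp_assoc]

end QRepHom

namespace QRep

variable {K : Type u} [Field K] {V : Type v} [Quiver.{v+1} V] (I S : ∀ i j : V, Set (i ⟶ j))

def InjectiveOn (X : QRep.{w} K V) : Prop :=
  ∀ {i j : V} (a : i ⟶ j), a ∈ I i j → Function.Injective (X.map a)

def SurjectiveOn (X : QRep.{w} K V) : Prop :=
  ∀ {i j : V} (s : i ⟶ j), s ∈ S i j → Function.Surjective (X.map s)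

protected def cast (X : QRep.{w} K V) {i j : V} (h : i = j) : X.space i ≃ₗ[K] X.space j :=
  LinearEquiv.cast h

section Quotient

variable {X : QRep.{w} K V}

def IsSubrep (X : QRep.{w} K V) (U : ∀ i, Submodule K (X.space i)) : Prop :=
  ∀ ⦃i j : V⦄ (b : i ⟶ j), U i ≤ (U j).comap (X.map b)

variable {U : ∀ i, Submodule K (X.space i)} (hU : X.IsSubrep U)

def quotient : QRep.{w} K V where
  space i := X.space i ⧸ U i
  map b := (U _).mapQ (U _) (X.map b) (hU b)

def mkQ : QRepHom X (quotient hU) where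
  app i := (U i).mkQ
  comm b := Submodule.mapQ_mkQ _ _ _ (h := hU b)

def liftQ {Z : QRep.{w} K V} (g : QRepHom X Z) (hg : ∀ i, U i ≤ LinearMap.ker (g.app i)) :
    QRepHom (quotient hU) Z where
  app i := (U i).liftQ (g.app i) (hg i)
  comm b := by
    apply Submodule.linearMap_qext
    ext x
    exact LinearMap.congr_fun (g.comm b) x

theorem liftQ_comp_mkQ {Z : QRep.{w} K V} (g : QRepHom X Z)
    (hg : ∀ i, U i ≤ LinearMap.ker (g.app i)) (i : V) :
    ((liftQ hU g hg).app i).comp ((mkQ hU).app i) = g.app i :=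
  (U i).liftQ_mkQ (g.app i) (hg i)

theorem injective_quotient_map {i j : V} (a : i ⟶ j) (ha : (U j).comap (X.map a) ≤ U i) :
    Function.Injective ((quotient hU).map a) := by
  change Function.Injective ((U i).mapQ (U j) (X.map a) (hU a))
  rw [← LinearMap.ker_eq_bot, Submodule.ker_mapQ, ← LinearMap.le_ker_iff_map, Submodule.ker_mkQ]
  exact ha

end Quotient

section InjQuot

variable (X : QRep.{w} K V)

def IsSaturated (U : ∀ i, Submodule K (X.space i)) : Prop :=
  X.IsSubrep U ∧ ∀ ⦃i j : V⦄ (a : i ⟶ j), a ∈ I i j → (U j).comap (X.map a) ≤ U i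

theorem isSaturated_sInf (𝒰 : Set (∀ i, Submodule K (X.space i)))
    (h𝒰 : ∀ U ∈ 𝒰, X.IsSaturated I U) : X.IsSaturated I (sInf 𝒰) := by
  have mem : ∀ i (x : X.space i), x ∈ sInf 𝒰 i ↔ ∀ U ∈ 𝒰, x ∈ U i := by
    simp [sInf_apply, Submodule.mem_iInf]
  refine ⟨fun i j b x hx => ?_, fun i j a ha x hx => ?_⟩
  · rw [Submodule.mem_comap, mem] at *
    exact fun U hU => (h𝒰 U hU).1 b (hx U hU)
  · rw [Submodule.mem_comap, mem] at *
    exact fun U hU => (h𝒰 U hU).2 a ha (hx U hU)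

theorem isSaturated_ker {Z : QRep.{w} K V} (hZ : Z.InjectiveOn I) (g : QRepHom X Z) :
    X.IsSaturated I fun i => LinearMap.ker (g.app i) := by
  refine ⟨fun i j b x hx => ?_, fun i j a ha x hx => ?_⟩
  · simp only [Submodule.mem_comap, LinearMap.mem_ker] at *
    rw [← LinearMap.comp_apply, ← g.comm, LinearMap.comp_apply, hx, map_zero]
  · simp only [Submodule.mem_comap, LinearMap.mem_ker] at *
    apply hZ a ha
    rw [← LinearMap.comp_apply, g.comm, LinearMap.comp_apply, hx, map_zero]

def injKernel : ∀ i, Submodule K (X.space i) := sInf {U | X.IsSaturated I U}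

theorem isSaturated_injKernel : X.IsSaturated I (X.injKernel I) :=
  X.isSaturated_sInf I _ fun _ hU => hU

theorem injKernel_le {U : ∀ i, Submodule K (X.space i)} (hU : X.IsSaturated I U) :
    X.injKernel I ≤ U :=
  sInf_le hU

/-- The largest quotient of `X` on which the arrows of `I` act injectively. -/
def injQuot : QRep.{w} K V := quotient (X.isSaturated_injKernel I).1

def toInjQuot : QRepHom X (X.injQuot I) := mkQ _

instance [∀ i, FiniteDimensional K (X.space i)] (i : V) :
    FiniteDimensional K ((X.injQuot I).space i) :=
  inferInstanceAs (FiniteDimensional K (X.space i ⧸ X.injKernel I i))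

theorem injectiveOn_injQuot : (X.injQuot I).InjectiveOn I := fun a ha =>
  injective_quotient_map _ a ((X.isSaturated_injKernel I).2 a ha)

theorem exists_lift_injQuot {Z : QRep.{w} K V} (hZ : Z.InjectiveOn I) (g : QRepHom X Z) :
    ∃ g' : QRepHom (X.injQuot I) Z, ∀ i, (g'.app i).comp ((X.toInjQuot I).app i) = g.app i :=
  ⟨liftQ _ g fun i => X.injKernel_le I (X.isSaturated_ker I hZ g) i, liftQ_comp_mkQ _ g _⟩

end InjQuot

section OfShrink

variable (P : V → Type*) [∀ v, AddCommGroup (P v)] [∀ v, Module K (P v)] [∀ v, Small.{w} (P v)]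
  (m : ∀ ⦃i j : V⦄, (i ⟶ j) → P i →ₗ[K] P j)

/-- The representation with spaces `P v` and maps `m`, moved down to universe `w`: the words
indexing the summands of `surjHull` live in `Type (v + 1)`. -/
def ofShrink : QRep.{w} K V where
  space v := Shrink.{w} (P v)
  map {i j} b := (Shrink.linearEquiv K (P j)).symm.toLinearMap ∘ₗ m b ∘ₗ
    (Shrink.linearEquiv K (P i)).toLinearMap

variable {P m}

instance [∀ v, FiniteDimensional K (P v)] (v : V) :
    FiniteDimensional K ((ofShrink P m).space v) :=
  Module.Finite.equiv (Shrink.linearEquiv K (P v)).symm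

theorem injective_ofShrink_map {i j : V} {b : i ⟶ j} (h : Function.Injective (m b)) :
    Function.Injective ((ofShrink P m).map b) :=
  (Shrink.linearEquiv K (P j)).symm.injective.comp (h.comp (Shrink.linearEquiv K (P i)).injective)

theorem surjective_ofShrink_map {i j : V} {b : i ⟶ j} (h : Function.Surjective (m b)) :
    Function.Surjective ((ofShrink P m).map b) :=
  (Shrink.linearEquiv K (P j)).symm.surjective.comp
    (h.comp (Shrink.linearEquiv K (P i)).surjective)

def toOfShrink {X : QRep.{w} K V} (f : ∀ v, X.space v →ₗ[K] P v)
    (hf : ∀ ⦃i j : V⦄ (b : i ⟶ j), m b ∘ₗ f i = f j ∘ₗ X.map b) : QRepHom X (ofShrink P m) where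
  app v := (Shrink.linearEquiv K (P v)).symm.toLinearMap ∘ₗ f v
  comm b := by
    ext x
    change (Shrink.linearEquiv K _).symm (m b (Shrink.linearEquiv K _
      ((Shrink.linearEquiv K _).symm (f _ x)))) = (Shrink.linearEquiv K _).symm (f _ (X.map b x))
    rw [LinearEquiv.apply_symm_apply, ← LinearMap.comp_apply, hf, LinearMap.comp_apply]

def ofShrinkHom {Z : QRep.{w} K V} (h : ∀ v, P v →ₗ[K] Z.space v)
    (hh : ∀ ⦃i j : V⦄ (b : i ⟶ j), Z.map b ∘ₗ h i = h j ∘ₗ m b) : QRepHom (ofShrink P m) Z where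
  app v := h v ∘ₗ (Shrink.linearEquiv K (P v)).toLinearMap
  comm b := by
    ext x
    change Z.map b (h _ (Shrink.linearEquiv K _ x)) = h _ (Shrink.linearEquiv K _
      ((Shrink.linearEquiv K _).symm (m b (Shrink.linearEquiv K _ x))))
    rw [LinearEquiv.apply_symm_apply, ← LinearMap.comp_apply, hh, LinearMap.comp_apply]

theorem ofShrinkHom_comp_toOfShrink {X Z : QRep.{w} K V} (f : ∀ v, X.space v →ₗ[K] P v)
    (hf : ∀ ⦃i j : V⦄ (b : i ⟶ j), m b ∘ₗ f i = f j ∘ₗ X.map b) (h : ∀ v, P v →ₗ[K] Z.space v)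
    (hh : ∀ ⦃i j : V⦄ (b : i ⟶ j), Z.map b ∘ₗ h i = h j ∘ₗ m b) (v : V) :
    (ofShrinkHom h hh).app v ∘ₗ (toOfShrink f hf).app v = h v ∘ₗ f v := by
  ext x
  exact congrArg (h v) ((Shrink.linearEquiv K (P v)).apply_symm_apply (f v x))

end OfShrink

end QRep

section Words

variable {V : Type v} [Quiver.{v+1} V]

/-- An arrow `a`, or the formal inverse `a⁻¹` of an arrow `a ∈ S`. -/
abbrev Letter (S : ∀ i j : V, Set (i ⟶ j)) : Type (v + 1) :=
  (Σ i j : V, i ⟶ j) ⊕ {a : (Σ i j : V, i ⟶ j) // a.2.2 ∈ S a.1 a.2.1}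

variable {S : ∀ i j : V, Set (i ⟶ j)}

namespace Letter

/-- In the notation of oriented cycles, `t(x) = x.src` and `h(x) = x.tgt`. -/
def src : Letter S → V
  | .inl a => a.1
  | .inr a => a.1.2.1

def tgt : Letter S → V
  | .inl a => a.2.1
  | .inr a => a.1.1

def Cancels (x y : Letter S) : Prop :=
  ∃ a h, x = .inl a ∧ y = .inr ⟨a, h⟩ ∨ x = .inr ⟨a, h⟩ ∧ y = .inl a

theorem Cancels.symm {x y : Letter S} (h : x.Cancels y) : y.Cancels x := by
  obtain ⟨a, ha, h | h⟩ := h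
  exacts [⟨a, ha, .inr h.symm⟩, ⟨a, ha, .inl h.symm⟩]

theorem cancels_inl_iff {x : Letter S} {a : Σ i j : V, i ⟶ j} :
    x.Cancels (.inl a) ↔ ∃ h, x = .inr ⟨a, h⟩ := by
  constructor
  · rintro ⟨a', h, ⟨-, h'⟩ | ⟨rfl, h'⟩⟩
    · exact absurd h' Sum.inl_ne_inr
    · obtain rfl := Sum.inl_injective h'
      exact ⟨h, rfl⟩
  · rintro ⟨h, rfl⟩
    exact ⟨a, h, .inr ⟨rfl, rfl⟩⟩

def Link (x y : Letter S) : Prop := x.src = y.tgt ∧ ¬ x.Cancels y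

def toCycleLetter : ∀ (x : Letter S) {i : V}, x.src = i →
    (i ⟶ x.tgt) ⊕ {a : x.tgt ⟶ i // a ∈ S _ _}
  | .inl ⟨_, _, a⟩, _, rfl => .inl a
  | .inr ⟨⟨_, _, a⟩, ha⟩, _, rfl => .inr ⟨a, ha⟩

theorem eq_inl_of_toCycleLetter {x : Letter S} {i : V} {h : x.src = i} {a : i ⟶ x.tgt}
    (hx : x.toCycleLetter h = .inl a) : x = .inl ⟨i, x.tgt, a⟩ := by
  rcases x with ⟨_, _, a'⟩ | ⟨⟨_, _, a'⟩, ha'⟩ <;> subst h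
  · cases hx; rfl
  · cases hx

theorem eq_inr_of_toCycleLetter {x : Letter S} {i : V} {h : x.src = i} {a : x.tgt ⟶ i}
    {ha : a ∈ S _ _} (hx : x.toCycleLetter h = .inr ⟨a, ha⟩) : x = .inr ⟨⟨x.tgt, i, a⟩, ha⟩ := by
  rcases x with ⟨_, _, a'⟩ | ⟨⟨_, _, a'⟩, ha'⟩ <;> subst h
  · cases hx
  · cases hx; rfl

end Letter

theorem nonempty_orientedCycle_of_link {n : ℕ} [NeZero n] (u : ZMod n → Letter S)
    (hu : ∀ k, (u k).Link (u (k + 1))) : Nonempty (OrientedCycle S) := by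
  refine ⟨⟨n, Nat.pos_of_neZero n, fun k => (u k).tgt,
    fun k => (u k).toCycleLetter (hu k).1, ?_, ?_⟩⟩
  · intro k x y hy hx hy' hxy
    refine (hu k).2 ⟨_, hxy ▸ hy, .inl ⟨Letter.eq_inl_of_toCycleLetter hx, ?_⟩⟩
    exact (Letter.eq_inr_of_toCycleLetter hy').trans (congrArg Sum.inr (Subtype.ext hxy.symm))
  · intro k x hx y hx' hy' hxy
    refine (hu k).2 ⟨_, hx, .inr ⟨Letter.eq_inr_of_toCycleLetter hx', ?_⟩⟩
    exact (Letter.eq_inl_of_toCycleLetter hy').trans (congrArg Sum.inl hxy.symm)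

theorem length_le_of_isChain_link [Finite V] [∀ i j : V, Finite (i ⟶ j)]
    (hS : IsEmpty (OrientedCycle S)) {l : List (Letter S)} (hl : l.IsChain Letter.Link) :
    l.length ≤ Nat.card (Letter S) := by
  by_contra h
  obtain ⟨n, _, u, hu⟩ := hl.exists_cyclic (by omega)
  exact hS.false (nonempty_orientedCycle_of_link u hu).some

def wordEnd (u : V) : List (Letter S) → V
  | [] => u
  | x :: _ => x.tgt

theorem wordEnd_eq_src {u : V} {x : Letter S} {l : List (Letter S)}
    (hc : (x :: l).IsChain Letter.Link) (hl : ∀ y ∈ (x :: l).getLast?, y.isRight ∧ y.src = u) :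
    wordEnd u l = x.src := by
  cases l with
  | nil => exact (hl x rfl).2.symm
  | cons y l => exact (List.isChain_cons_cons.mp hc).1.1.symm

variable (S) in
/-- A reduced word `x₀ x₁ ⋯ xₘ` (stored as `[x₀, …, xₘ]`), read from right to left as a walk
from `origin` to `v` which is empty or starts with an inverse letter `xₘ`. -/
@[ext]
structure AdmWord (v : V) : Type (v + 1) where
  origin : V
  letters : List (Letter S)
  isChain : letters.IsChain Letter.Link
  getLast?_spec : ∀ x ∈ letters.getLast?, x.isRight ∧ x.src = origin
  wordEnd_eq : wordEnd origin letters = v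

namespace AdmWord

theorem finite [Finite V] [∀ i j : V, Finite (i ⟶ j)] (hS : IsEmpty (OrientedCycle S)) (v : V) :
    Finite (AdmWord S v) := by
  have : Finite {l : List (Letter S) // l.length ≤ Nat.card (Letter S)} :=
    (List.finite_length_le _ _).to_subtype
  refine Finite.of_injective (fun w : AdmWord S v =>
    (w.origin, (⟨w.letters, length_le_of_isChain_link hS w.isChain⟩ :
      {l : List (Letter S) // l.length ≤ Nat.card (Letter S)}))) fun w w' h => ?_
  simp only [Prod.mk.injEq, Subtype.mk.injEq] at h
  exact AdmWord.ext h.1 h.2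

def nil (v : V) : AdmWord S v := ⟨v, [], .nil, by simp, rfl⟩

variable {i j : V}

open Classical in
/-- The reduced form of the word `b x l`. -/
def consArrow (b : i ⟶ j) (x : Letter S) (l : List (Letter S)) : List (Letter S) :=
  if x.Cancels (.inl ⟨i, j, b⟩) then l else .inl ⟨i, j, b⟩ :: x :: l

theorem consArrow_of_not_mem {b : i ⟶ j} (hb : b ∉ S i j) (x : Letter S) (l : List (Letter S)) :
    consArrow b x l = .inl ⟨i, j, b⟩ :: x :: l := by
  rw [consArrow, if_neg]
  exact fun h => hb (Letter.cancels_inl_iff.mp h).1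

theorem isChain_consArrow {b : i ⟶ j} {x : Letter S} {l : List (Letter S)}
    (hc : (x :: l).IsChain Letter.Link) (hx : x.tgt = i) :
    (consArrow b x l).IsChain Letter.Link := by
  unfold consArrow
  split_ifs with h
  · exact hc.tail
  · exact List.IsChain.cons_cons ⟨hx.symm, fun h' => h h'.symm⟩ hc

theorem getLast?_consArrow {u : V} {b : i ⟶ j} {x : Letter S} {l : List (Letter S)}
    (hl : ∀ y ∈ (x :: l).getLast?, y.isRight ∧ y.src = u) :
    ∀ y ∈ (consArrow b x l).getLast?, y.isRight ∧ y.src = u := by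
  unfold consArrow
  split_ifs
  · cases l with
    | nil => simp
    | cons y l => simpa only [List.getLast?_cons_cons] using hl
  · simpa only [List.getLast?_cons_cons] using hl

theorem wordEnd_consArrow {u : V} {b : i ⟶ j} {x : Letter S} {l : List (Letter S)}
    (hc : (x :: l).IsChain Letter.Link) (hl : ∀ y ∈ (x :: l).getLast?, y.isRight ∧ y.src = u) :
    wordEnd u (consArrow b x l) = j := by
  unfold consArrow
  split_ifs with h
  · rw [wordEnd_eq_src hc hl]
    obtain ⟨-, rfl⟩ := Letter.cancels_inl_iff.mp h
    rfl
  · rfl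

/-- The reduced form of the word `b w`. The empty word stays empty: on its summand of the hull,
`b` acts by `X.map b` (see `QRep.hullCoeff`). -/
def next (b : i ⟶ j) : AdmWord S i → AdmWord S j
  | ⟨_, [], _, _, _⟩ => nil j
  | ⟨_, x :: _, hc, hl, hx⟩ =>
    ⟨_, consArrow b x _, isChain_consArrow hc hx, getLast?_consArrow hl, wordEnd_consArrow hc hl⟩

theorem next_injective {b : i ⟶ j} (hb : b ∉ S i j) : Function.Injective (next (S := S) b) := by
  rintro ⟨u, _ | ⟨x, l⟩, hc, hl, hx⟩ ⟨u', _ | ⟨x', l'⟩, hc', hl', hx'⟩ h <;>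
    have h' := congrArg (fun w => (w.origin, w.letters)) h <;>
    simp only [next, nil, consArrow_of_not_mem hb, Prod.mk.injEq, reduceCtorEq, and_false,
      List.cons.injEq, true_and] at h'
  · exact AdmWord.ext (hx.trans hx'.symm) rfl
  · exact AdmWord.ext h'.1 (congrArg₂ List.cons h'.2.1 h'.2.2)

def consInv {s : i ⟶ j} (hs : s ∈ S i j) (w : AdmWord S j)
    (h : ∀ l, w.letters ≠ .inl ⟨i, j, s⟩ :: l) : AdmWord S i where
  origin := w.origin
  letters := .inr ⟨⟨i, j, s⟩, hs⟩ :: w.letters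
  isChain := by
    obtain ⟨u, l, hc, hl, he⟩ := w
    refine List.isChain_cons.mpr ⟨fun y hy => ?_, hc⟩
    obtain ⟨l', rfl⟩ : ∃ l', l = y :: l' := by
      cases l with
      | nil => simp at hy
      | cons y' l' => exact ⟨l', by simpa using hy⟩
    refine ⟨he.symm, fun ⟨a, ha, hxy⟩ => h l' ?_⟩
    rcases hxy with ⟨hx, -⟩ | ⟨hx, rfl⟩
    · exact absurd hx Sum.inr_ne_inl
    · cases hx; rfl
  getLast?_spec := by
    obtain ⟨u, _ | ⟨y, l⟩, hc, hl, he⟩ := w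
    · rintro y ⟨⟩
      exact ⟨rfl, he.symm⟩
    · simpa only [List.getLast?_cons_cons] using hl
  wordEnd_eq := rfl

theorem next_consInv {s : i ⟶ j} (hs : s ∈ S i j) (w : AdmWord S j)
    (h : ∀ l, w.letters ≠ .inl ⟨i, j, s⟩ :: l) : next s (consInv hs w h) = w :=
  AdmWord.ext rfl (if_pos ((Letter.cancels_inl_iff (a := ⟨i, j, s⟩)).mpr ⟨hs, rfl⟩))

theorem exists_next_eq {s : i ⟶ j} (hs : s ∈ S i j) (w : AdmWord S j) :
    ∃ w' : AdmWord S i, w'.letters ≠ [] ∧ next s w' = w := by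
  by_cases h : ∃ l, w.letters = .inl ⟨i, j, s⟩ :: l
  · obtain ⟨u, _, hc, hl, he⟩ := w
    obtain ⟨_ | ⟨y, l⟩, rfl⟩ := h
    · simp at hl
    have hy : ¬ y.Cancels (.inl ⟨i, j, s⟩) := fun h => (List.isChain_cons_cons.mp hc).1.2 h.symm
    refine ⟨⟨u, y :: l, hc.tail, by simpa only [List.getLast?_cons_cons] using hl,
      wordEnd_eq_src hc hl⟩, List.cons_ne_nil _ _, ?_⟩
    simp only [next, consArrow, if_neg hy]
  · exact ⟨consInv hs w (not_exists.mp h), List.cons_ne_nil _ _, next_consInv hs w _⟩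

end AdmWord

end Words

namespace QRep

variable {K : Type u} [Field K] {V : Type v} [Quiver.{v+1} V] (S : ∀ i j : V, Set (i ⟶ j))

section SurjHull

variable (X : QRep.{max w v} K V)

def hullCoeff {i j : V} (b : i ⟶ j) :
    ∀ w : AdmWord S i, X.space w.origin →ₗ[K] X.space (w.next b).origin
  | ⟨_, [], _, _, rfl⟩ => X.map b
  | ⟨_, _ :: _, _, _, _⟩ => LinearMap.id

theorem injective_hullCoeff {i j : V} {b : i ⟶ j} (hb : Function.Injective (X.map b))
    (w : AdmWord S i) : Function.Injective (X.hullCoeff S b w) := by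
  obtain ⟨u, _ | ⟨x, l⟩, hc, hl, rfl⟩ := w
  exacts [hb, Function.injective_id]

theorem surjective_hullCoeff {i j : V} (b : i ⟶ j) {w : AdmWord S i} (hw : w.letters ≠ []) :
    Function.Surjective (X.hullCoeff S b w) := by
  obtain ⟨u, _ | ⟨x, l⟩, hc, hl, rfl⟩ := w
  exacts [absurd rfl hw, Function.surjective_id]

variable [∀ v, Fintype (AdmWord S v)]

open Classical in
def hullMap {i j : V} (b : i ⟶ j) :
    (∀ w : AdmWord S i, X.space w.origin) →ₗ[K] ∀ w : AdmWord S j, X.space w.origin :=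
  LinearMap.piMonomial (AdmWord.next b) (X.hullCoeff S b)

open Classical in
theorem hullMap_single {i j : V} (b : i ⟶ j) (w : AdmWord S i) (ξ : X.space w.origin) :
    X.hullMap S b (Pi.single w ξ) = Pi.single (w.next b) (X.hullCoeff S b w ξ) := by
  unfold hullMap
  rw [LinearMap.piMonomial_single]

def surjHull : QRep.{max w v} K V :=
  ofShrink (fun v => ∀ w : AdmWord S v, X.space w.origin) fun _ _ => X.hullMap S

instance [∀ i, FiniteDimensional K (X.space i)] (v : V) :
    FiniteDimensional K ((X.surjHull S).space v) :=
  inferInstanceAs (FiniteDimensional K ((ofShrink.{max w v} _ fun _ _ => X.hullMap S).space v))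

open Classical in
def toSurjHull : QRepHom X (X.surjHull S) :=
  toOfShrink (fun v => LinearMap.single K (fun w : AdmWord S v => X.space w.origin) (.nil v))
    fun _ _ b => LinearMap.ext fun ξ => X.hullMap_single S b (.nil _) ξ

theorem memRepIS_surjHull {I : ∀ i j : V, Set (i ⟶ j)}
    (hdisj : ∀ i j : V, Disjoint (I i j) (S i j)) (hX : X.InjectiveOn I) :
    MemRepIS I S (X.surjHull S) := by
  classical
  refine ⟨fun {i j} a ha => injective_ofShrink_map ?_, fun {i j} s hs => surjective_ofShrink_map ?_⟩
  · exact LinearMap.injective_piMonomial _ _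
      (AdmWord.next_injective ((hdisj i j).notMem_of_mem_left ha))
      (X.injective_hullCoeff S (hX a ha))
  · refine LinearMap.surjective_piMonomial _ _ fun w => ?_
    obtain ⟨w', hw', rfl⟩ := AdmWord.exists_next_eq hs w
    exact ⟨w', rfl, X.surjective_hullCoeff S s hw'⟩

end SurjHull

section WordAct

variable {S} (Z : QRep.{max w v} K V)
  (σ : ∀ ⦃i j : V⦄ (s : i ⟶ j), s ∈ S i j → Z.space j →ₗ[K] Z.space i)

def letterAct : ∀ x : Letter S, Z.space x.src →ₗ[K] Z.space x.tgt
  | .inl ⟨_, _, a⟩ => Z.map a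
  | .inr ⟨⟨_, _, s⟩, hs⟩ => σ s hs

open Classical in
/-- The `else` branch is never taken for the letters of an `AdmWord`. -/
def wordAct (u : V) : ∀ l : List (Letter S), Z.space u →ₗ[K] Z.space (wordEnd u l)
  | [] => LinearMap.id
  | x :: l => if h : wordEnd u l = x.src then
      Z.letterAct σ x ∘ₗ (Z.cast h).toLinearMap ∘ₗ wordAct u l
    else 0

theorem wordAct_cons {u : V} {x : Letter S} {l : List (Letter S)} (h : wordEnd u l = x.src) :
    Z.wordAct σ u (x :: l) = Z.letterAct σ x ∘ₗ (Z.cast h).toLinearMap ∘ₗ Z.wordAct σ u l :=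
  dif_pos h

theorem cast_wordAct_congr {u v : V} {l l' : List (Letter S)} (hl : l = l')
    (h : wordEnd u l = v) (h' : wordEnd u l' = v) (y : Z.space u) :
    Z.cast h (Z.wordAct σ u l y) = Z.cast h' (Z.wordAct σ u l' y) := by
  subst hl
  rfl

def admWordAct {v : V} (w : AdmWord S v) : Z.space w.origin →ₗ[K] Z.space v :=
  (Z.cast w.wordEnd_eq).toLinearMap ∘ₗ Z.wordAct σ w.origin w.letters

theorem map_comp_admWordAct
    (hσ : ∀ ⦃i j : V⦄ (s : i ⟶ j) (hs : s ∈ S i j), Z.map s ∘ₗ σ s hs = .id)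
    {X : QRep.{max w v} K V} (g : QRepHom X Z) {i j : V} (b : i ⟶ j) (w : AdmWord S i) :
    Z.map b ∘ₗ Z.admWordAct σ w ∘ₗ g.app w.origin =
      Z.admWordAct σ (w.next b) ∘ₗ g.app _ ∘ₗ X.hullCoeff S b w := by
  obtain ⟨u, _ | ⟨x, l⟩, hc, hl, hx⟩ := w
  · cases hx
    ext ξ
    exact LinearMap.congr_fun (g.comm b) ξ
  ext ξ
  change Z.map b (Z.cast hx (Z.wordAct σ u (x :: l) (g.app u ξ))) =
    Z.cast (AdmWord.wordEnd_consArrow hc hl) (Z.wordAct σ u (AdmWord.consArrow b x l) (g.app u ξ))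
  have hsrc := wordEnd_eq_src hc hl
  by_cases h : x.Cancels (.inl ⟨i, j, b⟩)
  · -- `b` cancels the letter `b⁻¹`, which acts on `Z` by the section `σ b` of `Z.map b`
    obtain ⟨hb, rfl⟩ := Letter.cancels_inl_iff.mp h
    rw [Z.cast_wordAct_congr σ (v := j) (show AdmWord.consArrow b _ l = l from if_pos h) _ hsrc,
      Z.wordAct_cons σ hsrc]
    exact LinearMap.congr_fun (hσ b hb) _
  · rw [Z.cast_wordAct_congr σ (u := u) (v := j)
      (show AdmWord.consArrow b x l = .inl ⟨i, j, b⟩ :: x :: l from if_neg h) _ rfl,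
      Z.wordAct_cons σ (x := .inl ⟨i, j, b⟩) (l := x :: l) hx]
    rfl

end WordAct

theorem exists_lift_surjHull [∀ v, Fintype (AdmWord S v)] {X Z : QRep.{max w v} K V}
    (hZ : Z.SurjectiveOn S) (g : QRepHom X Z) :
    ∃ h : QRepHom (X.surjHull S) Z, ∀ v, (h.app v).comp ((X.toSurjHull S).app v) = g.app v := by
  classical
  choose σ hσ using fun i j (s : i ⟶ j) (hs : s ∈ S i j) =>
    (Z.map s).exists_rightInverse_of_surjective (LinearMap.range_eq_top.mpr (hZ s hs))
  let η (v : V) : (∀ w : AdmWord S v, X.space w.origin) →ₗ[K] Z.space v :=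
    LinearMap.lsum K _ ℕ fun w => Z.admWordAct σ w ∘ₗ g.app w.origin
  refine ⟨ofShrinkHom η fun i j b => LinearMap.pi_ext fun w ξ => ?_, fun v => ?_⟩
  · simp only [η, LinearMap.comp_apply, hullMap_single, LinearMap.lsum_piSingle]
    exact LinearMap.congr_fun (Z.map_comp_admWordAct σ hσ g b w) ξ
  · refine (ofShrinkHom_comp_toOfShrink _ _ η _ v).trans (LinearMap.ext fun ξ => ?_)
    exact LinearMap.lsum_piSingle K (fun w : AdmWord S v => X.space w.origin) ℕ _ (.nil v) ξ

end QRep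

end

/-- If `I` and `S` are disjoint sets of arrows of a finite quiver with no oriented
`I`-cycles and no oriented `S`-cycles, then `Rep^{I,S} Q` is covariantly finite in
`Rep Q`: every finite-dimensional representation `X` admits a morphism `f : X → Y`
with `Y ∈ Rep^{I,S} Q` through which every morphism from `X` to an object of
`Rep^{I,S} Q` factors. -/
theorem repIS_covariantly_finite {K : Type u} [Field K] {V : Type v}
    [Quiver.{v+1} V] [Fintype V] [∀ i j : V, Fintype (i ⟶ j)]
    (I S : ∀ i j : V, Set (i ⟶ j))
    (hdisj : ∀ i j : V, Disjoint (I i j) (S i j))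
    (hI : IsEmpty (OrientedCycle I)) (hS : IsEmpty (OrientedCycle S)) :
    ∀ (X : QRep.{max u v} K V) [∀ i, FiniteDimensional K (X.space i)],
      ∃ (Y : QRep.{max u v} K V) (_ : ∀ i, FiniteDimensional K (Y.space i))
        (f : QRepHom X Y), MemRepIS I S Y ∧
        ∀ (Z : QRep.{max u v} K V) (_ : ∀ i, FiniteDimensional K (Z.space i)),
          MemRepIS I S Z → ∀ g : QRepHom X Z,
            ∃ h : QRepHom Y Z, ∀ i : V, (h.app i).comp (f.app i) = g.app i := by
  intro X _
  have (v : V) : Finite (AdmWord S v) := AdmWord.finite hS v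
  have (v : V) : Fintype (AdmWord S v) := Fintype.ofFinite _
  let X' := X.injQuot I
  refine ⟨X'.surjHull S, inferInstance, (X'.toSurjHull S).comp (X.toInjQuot I),
    X'.memRepIS_surjHull S hdisj (X.injectiveOn_injQuot I), fun Z _ hZ g => ?_⟩
  obtain ⟨g', hg'⟩ := X.exists_lift_injQuot I hZ.1 g
  obtain ⟨h, hh⟩ := X'.exists_lift_surjHull S hZ.2 g'
  exact ⟨h, fun i => by rw [QRepHom.comp, ← LinearMap.comp_assoc, hh, hg']⟩
end
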